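/- arXiv:1608.03336 — 3 statements merged into one kernel-verified Lean document; each statement's English description precedes it below -/
import Mathlib

section
/- Let G be a group with trivial center such that the image of the canonical embedding G → Aut(G) (by conjugation) is a characteristic subgroup of Aut(G). Then every automorphism of Aut(G) is inner, i.e. Out(Aut(G)) is trivial. -/
/-!
Since the centre is trivial, `conj : G → Aut G` is injective, so `G ≅ Inn G`. As `Inn G` is
characteristic, every `φ ∈ Aut (Aut G)` restricts to an automorphism of `Inn G`, i.e. yields
`σ ∈ Aut G` with `φ (conj g) = conj (σ g)`. Applying `φ` to `conj (θ g) = θ * conj g * θ⁻¹`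
gives `conj (φ θ (σ g)) = conj (σ (θ g))`, so `φ θ = σ * θ * σ⁻¹` by injectivity of `conj`.
-/

open Function

namespace MulAut

variable {G A : Type*} [Group G] [Group A]

theorem conj_injective_of_center_eq_bot (hZ : Subgroup.center G = ⊥) :
    Injective (conj : G →* MulAut G) := by
  refine (injective_iff_map_eq_one _).2 fun a ha => ?_
  have hcentral : a ∈ Subgroup.center G := Subgroup.mem_center_iff.2 fun g => by
    simpa [eq_mul_inv_iff_mul_eq] using (DFunLike.congr_fun ha g).symm
  simpa [hZ] using hcentral

theorem conj_mulEquiv_apply (θ : MulAut G) (g : G) : conj (θ g) = θ * conj g * θ⁻¹ := by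
  ext x
  simp [mul_assoc]

noncomputable def restrictRange {i : G →* A} (hi : Injective i) (hc : i.range.Characteristic)
    (φ : MulAut A) : MulAut G :=
  (MonoidHom.ofInjective hi).trans <| (φ.subgroupMap i.range).trans <|
    (MulEquiv.subgroupCongr (Subgroup.characteristic_iff_map_eq.1 hc φ)).trans
      (MonoidHom.ofInjective hi).symm

theorem apply_restrictRange {i : G →* A} (hi : Injective i) (hc : i.range.Characteristic)
    (φ : MulAut A) (g : G) : i (restrictRange hi hc φ g) = φ (i g) :=
  MonoidHom.apply_ofInjective_symm hi _

theorem eq_conj_of_conj_apply_eq (hconj : Injective (conj : G →* MulAut G))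
    {φ : MulAut (MulAut G)} {σ : MulAut G} (hσ : ∀ g, conj (σ g) = φ (conj g)) : φ = conj σ := by
  ext θ x
  have hcomm : ∀ g, φ θ (σ g) = σ (θ g) := fun g => hconj <| by
    rw [conj_mulEquiv_apply, hσ, hσ, conj_mulEquiv_apply, ← map_inv, map_mul, map_mul]
  simpa using hcomm (σ⁻¹ x)

end MulAut

/-- Burnside: if a centerless group `G` is characteristic (as `Inn G = range of conj`)
in `Aut G`, then every automorphism of `Aut G` is inner. -/
theorem stmt_0 (G : Type*) [Group G] (hZ : Subgroup.center G = ⊥)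
    (hchar : ((MulAut.conj : G →* MulAut G).range).Characteristic) :
    ∀ φ : MulAut (MulAut G), ∃ ψ : MulAut G, ∀ θ : MulAut G, φ θ = ψ * θ * ψ⁻¹ := by
  have hconj := MulAut.conj_injective_of_center_eq_bot hZ
  intro φ
  refine ⟨MulAut.restrictRange hconj hchar φ, fun θ => ?_⟩
  exact DFunLike.congr_fun
    (MulAut.eq_conj_of_conj_apply_eq hconj (MulAut.apply_restrictRange hconj hchar φ)) θ
end

section
/- Let G be a group with trivial center. If Inn(G) is characteristic in Aut(G), then for every φ ∈ Aut(Aut(G)) there exists a unique automorphism φ̄ of G such that φ(i(g)) = i(φ̄(g)) for all g ∈ G, where i: G → Aut(G) is the conjugation embedding. -/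
/-! Trivial centre makes `i : G → Aut G` injective, so `G ≃* Inn G`; as `φ` maps `Inn G` onto itself,
`φ̄` is `φ` restricted to `Inn G` and transported back to `G`, and it is unique because `i` is injective. -/

theorem MulAut.ker_conj (G : Type*) [Group G] :
    (MulAut.conj : G →* MulAut G).ker = Subgroup.center G := by
  ext g
  simp only [MonoidHom.mem_ker, Subgroup.mem_center_iff, MulEquiv.ext_iff, MulAut.conj_apply,
    MulAut.one_apply, mul_inv_eq_iff_eq_mul]
  exact forall_congr' fun _ => eq_comm

theorem MulAut.conj_injective {G : Type*} [Group G] (hZ : Subgroup.center G = ⊥) :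
    Function.Injective (MulAut.conj : G →* MulAut G) := by
  rw [← MonoidHom.ker_eq_bot_iff, MulAut.ker_conj, hZ]

theorem MulEquiv.existsUnique_comp_eq_of_map_range_eq {G H : Type*} [Group G] [Group H]
    {f : G →* H} (hf : Function.Injective f) (φ : H ≃* H)
    (hφ : f.range.map φ.toMonoidHom = f.range) :
    ∃! ψ : G ≃* G, ∀ g, φ (f g) = f (ψ g) := by
  let e : G ≃* f.range := MonoidHom.ofInjective hf
  let φR : f.range ≃* f.range := (φ.subgroupMap f.range).trans (MulEquiv.subgroupCongr hφ)
  refine ⟨e.trans (φR.trans e.symm), fun g => ?_, fun ψ hψ => ?_⟩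
  · exact (MonoidHom.apply_ofInjective_symm hf (φR (e g))).symm
  · ext g
    apply hf
    rw [← hψ]
    exact (MonoidHom.apply_ofInjective_symm hf (φR (e g))).symm

/-- If `G` is centerless and `Inn G` is characteristic in `Aut G`, then every automorphism
`φ` of `Aut G` restricts to a unique automorphism `φ̄` of `G` along the conjugation embedding. -/
theorem stmt_1 (G : Type*) [Group G] (hZ : Subgroup.center G = ⊥)
    (hchar : ((MulAut.conj : G →* MulAut G).range).Characteristic) :
    ∀ φ : MulAut (MulAut G), ∃! φbar : MulAut G,
      ∀ g : G, φ (MulAut.conj g) = MulAut.conj (φbar g) := fun φ =>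
  MulEquiv.existsUnique_comp_eq_of_map_range_eq (MulAut.conj_injective hZ) φ
    (Subgroup.characteristic_iff_map_eq.mp hchar φ)
end

section
/- Let Γ be a group and let Λ = ⊕_{i≥1} γ_i(Γ)/γ_{i+1}(Γ) be the associated graded Lie ring of the lower central series, with bracket induced by commutators. If the center of Λ is trivial, then for every k ≥ 1 the center of Γ/γ_{k+1}(Γ) equals γ_k(Γ)/γ_{k+1}(Γ). -/
/-!
If `x` is central modulo `γ_{k+1}`, the three subgroups lemma gives, by induction on `j`,
`⁅x, γ_j⁆ ⊆ γ_{k+j}`. Hence as long as `x ∈ γ_i` with `i < k`, the class of `x` in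
`γ_i/γ_{i+1}` is central in the graded Lie ring, so it vanishes and `x ∈ γ_{i+1}`;
climbing from `i = 1` gives `x ∈ γ_k`. The converse is the definition of `γ_{k+1}`.
-/

open Subgroup

open scoped commutatorElement

namespace Subgroup

variable {G : Type*} [Group G]

theorem commutator_commutator_le_of_rotate {H₁ H₂ H₃ N : Subgroup G} [N.Normal]
    (h1 : ⁅⁅H₂, H₃⁆, H₁⁆ ≤ N) (h2 : ⁅⁅H₃, H₁⁆, H₂⁆ ≤ N) : ⁅⁅H₁, H₂⁆, H₃⁆ ≤ N := by
  simp only [← QuotientGroup.ker_mk' N, ← map_eq_bot_iff, map_commutator] at h1 h2 ⊢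
  exact commutator_commutator_eq_bot_of_rotate h1 h2

theorem commutator_lowerCentralSeries_le_of_commutator_top_le {H : Subgroup G} {k : ℕ}
    (hH : ⁅H, ⊤⁆ ≤ (⊤ : Subgroup G).lowerCentralSeries k) (j : ℕ) :
    ⁅H, (⊤ : Subgroup G).lowerCentralSeries j⁆ ≤ (⊤ : Subgroup G).lowerCentralSeries (k + j) := by
  induction j generalizing H k with
  | zero => exact hH
  | succ j ih =>
    rw [commutator_comm, lowerCentralSeries_succ]
    apply commutator_commutator_le_of_rotate
    · -- This is why the induction generalizes over `H`: `ih` is used for `H := lowerCentralSeries ⊤ k`.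
      calc ⁅⁅⊤, H⁆, (⊤ : Subgroup G).lowerCentralSeries j⁆
          ≤ ⁅(⊤ : Subgroup G).lowerCentralSeries k, (⊤ : Subgroup G).lowerCentralSeries j⁆ :=
            commutator_mono (by rwa [commutator_comm]) le_rfl
        _ ≤ (⊤ : Subgroup G).lowerCentralSeries (k + 1 + j) := ih le_rfl
        _ = (⊤ : Subgroup G).lowerCentralSeries (k + (j + 1)) := by rw [add_right_comm, add_assoc]
    · exact commutator_mono (ih hH) le_rfl

theorem commutator_mem_lowerCentralSeries_of_forall {k : ℕ} {x : G}
    (hx : ∀ y, ⁅x, y⁆ ∈ (⊤ : Subgroup G).lowerCentralSeries k) {j : ℕ} {y : G}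
    (hy : y ∈ (⊤ : Subgroup G).lowerCentralSeries j) :
    ⁅x, y⁆ ∈ (⊤ : Subgroup G).lowerCentralSeries (k + j) :=
  commutator_lowerCentralSeries_le_of_commutator_top_le
    (H := upperCentralSeriesStep ((⊤ : Subgroup G).lowerCentralSeries k))
    (commutator_le.2 fun _ hg y _ => hg y) j (commutator_mem_commutator hx hy)

theorem mem_lowerCentralSeries_of_commutator_mem
    (hcenterless : ∀ i : ℕ, ∀ x ∈ (⊤ : Subgroup G).lowerCentralSeries i,
      (∀ j : ℕ, ∀ y ∈ (⊤ : Subgroup G).lowerCentralSeries j,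
        ⁅x, y⁆ ∈ (⊤ : Subgroup G).lowerCentralSeries (i + j + 2)) →
        x ∈ (⊤ : Subgroup G).lowerCentralSeries (i + 1))
    {k : ℕ} {x : G} (hx : ∀ j : ℕ, ∀ y ∈ (⊤ : Subgroup G).lowerCentralSeries j,
      ⁅x, y⁆ ∈ (⊤ : Subgroup G).lowerCentralSeries (k + j)) :
    ∀ {i : ℕ}, i < k → x ∈ (⊤ : Subgroup G).lowerCentralSeries i
  | 0, _ => mem_top x
  | i + 1, hi => hcenterless i x (mem_lowerCentralSeries_of_commutator_mem hcenterless hx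
      (by omega)) fun j _ hy => lowerCentralSeries_antitone _ (by omega) (hx j _ hy)

end Subgroup

theorem QuotientGroup.mk_mem_center_iff {G : Type*} [Group G] {N : Subgroup G} [N.Normal]
    {x : G} : (x : G ⧸ N) ∈ center (G ⧸ N) ↔ ∀ y, ⁅x, y⁆ ∈ N := by
  rw [← Subgroup.mem_upperCentralSeriesStep, Subgroup.upperCentralSeriesStep_eq_comap_center]
  rfl

/-- If the associated graded Lie ring `Λ = ⊕ γ_i(Γ)/γ_{i+1}(Γ)` of the lower central series
has trivial center (expressed at the level of the group: any `x ∈ γ_{i+1}(Γ)` whose group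
commutators with all of `γ_{j+1}(Γ)` land in `γ_{i+j+3}(Γ)` must lie in `γ_{i+2}(Γ)`; here
`lowerCentralSeries Γ i = γ_{i+1}(Γ)`), then for every `k ≥ 1` the center of
`Γ/γ_{k+1}(Γ)` is exactly `γ_k(Γ)/γ_{k+1}(Γ)`. -/
theorem stmt_10 (Γ : Type*) [Group Γ]
    (hcenterless : ∀ i : ℕ, ∀ x ∈ (⊤ : Subgroup Γ).lowerCentralSeries i,
      (∀ j : ℕ, ∀ y ∈ (⊤ : Subgroup Γ).lowerCentralSeries j, ⁅x, y⁆ ∈ (⊤ : Subgroup Γ).lowerCentralSeries (i + j + 2)) →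
        x ∈ (⊤ : Subgroup Γ).lowerCentralSeries (i + 1)) :
    ∀ k : ℕ, 1 ≤ k → ∀ x : Γ,
      ((QuotientGroup.mk x : Γ ⧸ (⊤ : Subgroup Γ).lowerCentralSeries k) ∈
          Subgroup.center (Γ ⧸ (⊤ : Subgroup Γ).lowerCentralSeries k) ↔
        x ∈ (⊤ : Subgroup Γ).lowerCentralSeries (k - 1)) := by
  intro k hk x
  obtain ⟨k, rfl⟩ := Nat.exists_eq_add_of_le' hk
  rw [QuotientGroup.mk_mem_center_iff]
  constructor
  · intro hx
    exact mem_lowerCentralSeries_of_commutator_mem hcenterless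
      (fun _ _ hy => commutator_mem_lowerCentralSeries_of_forall hx hy) (by omega)
  · intro hx y
    exact commutator_mem_commutator hx (mem_top y)
end
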